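/- For a ∈ [2, 24], Y ∈ [0, 1/2], and every integer n with |n| ≥ 2, the function f_n'(a, Y) := (2aπ²(n - Y)⁶ - 15π(n - Y)⁴ + (15/a - aπ/2)(n - Y)² + 1/4)·exp(-aπ(n - Y)²) is nonnegative. -/
import Mathlib


theorem fn_deriv_nonneg (a Y : ℝ) (ha1 : 2 ≤ a) (ha2 : a ≤ 24)
    (hY1 : 0 ≤ Y) (hY2 : Y ≤ 1/2) (n : ℤ) (hn : 2 ≤ |n|) :
    0 ≤ (2 * a * Real.pi^2 * ((n : ℝ) - Y)^6 - 15 * Real.pi * ((n : ℝ) - Y)^4 +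
        (15 / a - a * Real.pi / 2) * ((n : ℝ) - Y)^2 + 1/4) *
      Real.exp (-a * Real.pi * ((n : ℝ) - Y)^2) := by
  set x : ℝ := (n : ℝ) - Y with hx
  have ht : (9/4 : ℝ) ≤ x^2 := by
    rcases le_or_gt 0 n with hpos | hneg
    · have h2 : (2 : ℤ) ≤ n := by
        rwa [abs_of_nonneg hpos] at hn
      have h2' : (2 : ℝ) ≤ (n : ℝ) := by exact_mod_cast h2
      have hxx : (3/2 : ℝ) ≤ x := by simp only [hx]; linarith
      nlinarith
    · have h2 : n ≤ -2 := by
        have := abs_of_neg hneg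
        omega
      have h2' : (n : ℝ) ≤ -2 := by exact_mod_cast h2
      have hxx : x ≤ -2 := by simp only [hx]; linarith
      nlinarith
  have hpi : (3.14 : ℝ) ≤ Real.pi := by linarith [Real.pi_gt_d6]
  have hexp : 0 < Real.exp (-a * Real.pi * x^2) := Real.exp_pos _
  have hdiv : 0 ≤ 15 / a * x^2 := by positivity
  apply mul_nonneg _ hexp.le
  have key : 0 ≤ 2 * a * Real.pi^2 * (x^2)^3 - 15 * Real.pi * (x^2)^2 - a * Real.pi / 2 * x^2 := by
    set t : ℝ := x^2 with htdef
    have ht0 : (0:ℝ) < t := lt_of_lt_of_le (by norm_num) ht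
    have h1 : 0 ≤ 4 * Real.pi * t^2 - 15 * t - 1 := by
      nlinarith [mul_nonneg (by linarith : (0:ℝ) ≤ t - 9/4) (by nlinarith : (0:ℝ) ≤ 4 * Real.pi * t),
        mul_nonneg (by linarith : (0:ℝ) ≤ Real.pi - 3.14) ht0.le]
    have h2 : 0 ≤ (a - 2) * (2 * Real.pi * t^2 - 1/2) := by
      apply mul_nonneg (by linarith)
      nlinarith
    have h3 : 0 ≤ 2 * a * Real.pi * t^2 - 15 * t - a/2 := by nlinarith
    have h4 : 0 ≤ Real.pi * t := by positivity
    calc (0:ℝ) ≤ (Real.pi * t) * (2 * a * Real.pi * t^2 - 15 * t - a/2) := mul_nonneg h4 h3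
      _ = 2 * a * Real.pi^2 * t^3 - 15 * Real.pi * t^2 - a * Real.pi / 2 * t := by ring
  have hx6 : x^6 = (x^2)^3 := by ring
  have hx4 : x^4 = (x^2)^2 := by ring
  rw [hx6, hx4]
  have : (15 / a - a * Real.pi / 2) * x^2 = 15 / a * x^2 - a * Real.pi / 2 * x^2 := by ring
  rw [this]
  linarith
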